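/- Let [a, b] be compact, φ₀, φ₁ integrable on [a, b] with φ₀(x) − φ₁(x) positive semidefinite for a.e. x, and for ε ∈ [0, 1] set φ_ε = φ₀ + ε·(φ₁ − φ₀). Fix β ∈ ℝ and let u : [0,1] × [a,b] → ℝ² be continuously differentiable such that each u_ε := u(ε, ·) is a nontrivial solution of τ_{φ_ε} u_ε = 0 with u_ε(b) = (sin β, cos β). Let θ : [0,1] × [a,b] → ℝ be continuous, differentiable in ε, such that θ(ε, ·) is a Prüfer angle of u_ε with θ(ε, b) = β for all ε. Then ∂_ε θ(ε, x) = −W_x(u_ε, ∂_ε u_ε)/ρ_ε(x)² ≤ 0 for all ε ∈ [0,1] and x ∈ [a,b]; moreover ∂_ε θ(ε, x) < 0 whenever φ₀ − φ₁ is positive definite on a subset of (x, b) of positive Lebesgue measure. Analogously, if instead u_ε(a) = (sin α, cos α) and θ(ε, a) = α for all ε, then ∂_ε θ(ε, x) ≥ 0, with strict inequality when φ₀ − φ₁ is positive definite on a subset of (a, x) of positive Lebesgue measure. -/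

import Mathlib

open MeasureTheory Real Set

/-- The real matrix representing `(1/i)·σ₂`. -/
noncomputable def Jmat : Matrix (Fin 2) (Fin 2) ℝ := !![0, -1; 1, 0]

/-- The Wronskian `W_x(u,v) = u₁(x) v₂(x) − u₂(x) v₁(x)`. -/
noncomputable def Wr (u v : ℝ → Fin 2 → ℝ) (x : ℝ) : ℝ :=
  u x 0 * v x 1 - u x 1 * v x 0

/-- The Euclidean inner product on `ℝ²`. -/
noncomputable def ip (a b : Fin 2 → ℝ) : ℝ := a 0 * b 0 + a 1 * b 1

/-- `u` is locally absolutely continuous on `I` with a.e. derivative `u'`. -/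
def IsACDeriv (I : Set ℝ) (u u' : ℝ → Fin 2 → ℝ) : Prop :=
  ContinuousOn u I ∧
  ∀ c ∈ I, ∀ x ∈ I, ∀ i : Fin 2,
    IntervalIntegrable (fun t => u' t i) volume c x ∧
    u x i = u c i + ∫ t in c..x, u' t i

/-- `u` is a solution of the Dirac equation `τ_φ u = λ u` on `I`. -/
def IsDiracSolution (I : Set ℝ) (φ : ℝ → Matrix (Fin 2) (Fin 2) ℝ) (lam : ℝ)
    (u : ℝ → Fin 2 → ℝ) : Prop :=
  ∃ u' : ℝ → Fin 2 → ℝ, IsACDeriv I u u' ∧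
    ∀ᵐ x ∂volume, x ∈ I → Jmat.mulVec (u' x) + (φ x).mulVec (u x) = lam • u x

/-- `θ` is a Prüfer angle for the nowhere vanishing continuous function `u` on `I`. -/
def IsPruefer (I : Set ℝ) (u : ℝ → Fin 2 → ℝ) (θ : ℝ → ℝ) : Prop :=
  ContinuousOn θ I ∧
  ∀ x ∈ I, ∃ ρ : ℝ, 0 < ρ ∧ u x 0 = ρ * Real.sin (θ x) ∧ u x 1 = ρ * Real.cos (θ x)

/-!
Differentiating the Prüfer relation `u₀ cos θ = u₁ sin θ` in `ε` gives
`∂_ε θ · |u_ε|² = -W(u_ε, ∂_ε u_ε)`. Subtracting the equations of `u_ε` and `u_e` yields the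
Lagrange identity `W(u_ε, u_e)|_c^x = (e - ε) ∫_c^x ⟨u_ε, (φ₁ - φ₀) u_e⟩`; dividing by `e - ε`
and letting `e → ε` (dominated convergence) gives
`W(u_ε, ∂_ε u_ε)|_c^x = ∫_c^x ⟨u_ε, (φ₁ - φ₀) u_ε⟩`.
At the normalisation point `c` the value `u_ε(c)` does not depend on `ε`, so `∂_ε u_ε(c) = 0` and
`W(u_ε, ∂_ε u_ε)(x) = ∫_x^c ⟨u_ε, (φ₀ - φ₁) u_ε⟩`. Since `φ₀ - φ₁ ≥ 0` this has the sign of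
`c - x`, strictly so when `φ₀ - φ₁ > 0` on a set of positive measure, as `u_ε` never vanishes.
-/

open Matrix

theorem intervalIntegral_deriv_mul_add_mul_eq_sub {f g f' g' : ℝ → ℝ} {c x : ℝ}
    (hf' : IntervalIntegrable f' volume c x) (hg' : IntervalIntegrable g' volume c x)
    (hf : ∀ y ∈ uIcc c x, f y = f c + ∫ t in c..y, f' t)
    (hg : ∀ y ∈ uIcc c x, g y = g c + ∫ t in c..y, g' t) :
    ∫ t in c..x, (f' t * g t + f t * g' t) = f x * g x - f c * g c := by
  -- `F`, `G` agree with `f`, `g` on `[c, x]`, are absolutely continuous, and by Lebesgue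
  -- differentiation have derivatives `f'`, `g'` almost everywhere.
  set F : ℝ → ℝ := fun y => f c + ∫ t in c..y, f' t
  set G : ℝ → ℝ := fun y => g c + ∫ t in c..y, g' t
  have hF : AbsolutelyContinuousOnInterval F c x :=
    (LipschitzWith.const (f c)).lipschitzOnWith.absolutelyContinuousOnInterval.add
      (hf'.absolutelyContinuousOnInterval_intervalIntegral left_mem_uIcc)
  have hG : AbsolutelyContinuousOnInterval G c x :=
    (LipschitzWith.const (g c)).lipschitzOnWith.absolutelyContinuousOnInterval.add
      (hg'.absolutelyContinuousOnInterval_intervalIntegral left_mem_uIcc)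
  rw [hf x right_mem_uIcc, hg x right_mem_uIcc]
  convert hF.integral_deriv_mul_eq_sub hG using 1
  · refine intervalIntegral.integral_congr_ae ?_
    filter_upwards [hf'.ae_hasDerivAt_integral, hg'.ae_hasDerivAt_integral] with t hFt hGt ht
    have ht' : t ∈ uIcc c x := uIoc_subset_uIcc ht
    rw [((hFt ht' c left_mem_uIcc).const_add (f c)).deriv,
      ((hGt ht' c left_mem_uIcc).const_add (g c)).deriv, hf t ht', hg t ht']
  · simp [F, G]

theorem hasDerivWithinAt_of_eqOn_sub_mul {f g : ℝ → ℝ} {s : Set ℝ} {ε : ℝ}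
    (hfg : ∀ e ∈ s, f e = (e - ε) * g e) (hg : ContinuousWithinAt g s ε) (hε : ε ∈ s) :
    HasDerivWithinAt f (g ε) s ε := by
  rw [hasDerivWithinAt_iff_tendsto_slope]
  refine (hg.mono sdiff_subset).tendsto.congr' ?_
  filter_upwards [self_mem_nhdsWithin] with e ⟨he, hne⟩
  rw [slope_def_field, hfg e he, hfg ε hε, sub_self, zero_mul, sub_zero,
    mul_div_cancel_left₀ _ (sub_ne_zero.mpr hne)]

theorem HasDerivAt.eq_zero_of_eqOn_const {f : ℝ → ℝ} {f' : ℝ} {s : Set ℝ} {ε : ℝ}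
    (hf : HasDerivAt f f' ε) (hs : UniqueDiffWithinAt ℝ s ε)
    (hconst : ∀ e ∈ s, f e = f ε) : f' = 0 :=
  hs.eq_deriv _ hf.hasDerivWithinAt ((hasDerivWithinAt_const ε s (f ε)).congr hconst rfl)

theorem continuousOn_intervalIntegral_mul {P : Type*} [TopologicalSpace P]
    [FirstCountableTopology P] {s : Set P} {m : ℝ → ℝ} {g : P → ℝ → ℝ} {c x : ℝ}
    (hs : IsCompact s) (hm : IntervalIntegrable m volume c x)
    (hg : ContinuousOn (fun p : P × ℝ => g p.1 p.2) (s ×ˢ uIcc c x)) :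
    ContinuousOn (fun e => ∫ t in c..x, m t * g e t) s := by
  obtain ⟨C, hC⟩ := (hs.prod isCompact_uIcc).exists_bound_of_continuousOn hg
  have hslice : ∀ e ∈ s, ContinuousOn (g e) (uIcc c x) := fun e he =>
    hg.comp (Continuous.continuousOn (by fun_prop)) fun t ht => mk_mem_prod he ht
  intro ε hε
  refine intervalIntegral.continuousWithinAt_of_dominated_interval
    (bound := fun t => |m t| * C) ?_ ?_ (hm.abs.mul_const C) ?_
  · filter_upwards [self_mem_nhdsWithin] with e he
    exact (hm.mul_continuousOn (hslice e he)).def'.aestronglyMeasurable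
  · filter_upwards [self_mem_nhdsWithin] with e he
    refine Filter.Eventually.of_forall fun t ht => ?_
    rw [norm_mul, Real.norm_eq_abs]
    exact mul_le_mul_of_nonneg_left (hC (e, t) ⟨he, uIoc_subset_uIcc ht⟩) (abs_nonneg _)
  · refine Filter.Eventually.of_forall fun t ht => ?_
    have ht' : t ∈ uIcc c x := uIoc_subset_uIcc ht
    exact continuousWithinAt_const.mul ((hg (ε, t) ⟨hε, ht'⟩).comp (f := fun e : P => (e, t))
      (Continuous.continuousWithinAt (by fun_prop)) fun e he => mk_mem_prod he ht')

theorem ip_eq_dotProduct (a b : Fin 2 → ℝ) : ip a b = a ⬝ᵥ b := by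
  simp [ip, dotProduct, Fin.sum_univ_two]

theorem ip_self_pos {v : Fin 2 → ℝ} (hv : v ≠ 0) : 0 < ip v v := by
  simpa [ip_eq_dotProduct] using dotProduct_star_self_pos_iff.mpr hv

theorem ip_mulVec_eq_sum (w : Fin 2 → ℝ) (M : Matrix (Fin 2) (Fin 2) ℝ) (v : Fin 2 → ℝ) :
    ip w (M *ᵥ v) = ∑ j, (w ᵥ* M) j * v j := by
  rw [ip_eq_dotProduct, dotProduct_mulVec]
  rfl

theorem Matrix.PosSemidef.ip_mulVec_self_nonneg {A : Matrix (Fin 2) (Fin 2) ℝ}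
    (hA : A.PosSemidef) (v : Fin 2 → ℝ) : 0 ≤ ip v (A *ᵥ v) := by
  simpa [ip_eq_dotProduct] using hA.dotProduct_mulVec_nonneg v

theorem Matrix.PosDef.ip_mulVec_self_pos {A : Matrix (Fin 2) (Fin 2) ℝ} (hA : A.PosDef)
    {v : Fin 2 → ℝ} (hv : v ≠ 0) : 0 < ip v (A *ᵥ v) := by
  simpa [ip_eq_dotProduct] using hA.dotProduct_mulVec_pos hv

section IntegralOfIp

variable {M : ℝ → Matrix (Fin 2) (Fin 2) ℝ} {c x : ℝ}

theorem intervalIntegrable_vecMul_apply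
    (hM : ∀ i j, IntervalIntegrable (fun t => M t i j) volume c x)
    {w : ℝ → Fin 2 → ℝ} (hw : ContinuousOn w (uIcc c x)) (j : Fin 2) :
    IntervalIntegrable (fun t => (w t ᵥ* M t) j) volume c x := by
  simpa only [vecMul, dotProduct, Finset.sum_fn] using IntervalIntegrable.sum Finset.univ
    (f := fun i t => w t i * M t i j) fun i _ =>
      (hM i j).continuousOn_mul (continuousOn_pi.mp hw i)

theorem intervalIntegrable_ip_mulVec
    (hM : ∀ i j, IntervalIntegrable (fun t => M t i j) volume c x)
    {w v : ℝ → Fin 2 → ℝ} (hw : ContinuousOn w (uIcc c x)) (hv : ContinuousOn v (uIcc c x)) :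
    IntervalIntegrable (fun t => ip (w t) (M t *ᵥ v t)) volume c x := by
  simpa only [ip_mulVec_eq_sum, Finset.sum_fn] using IntervalIntegrable.sum Finset.univ
    (f := fun j t => (w t ᵥ* M t) j * v t j) fun j _ =>
      (intervalIntegrable_vecMul_apply hM hw j).mul_continuousOn (continuousOn_pi.mp hv j)

theorem continuousOn_intervalIntegral_ip_mulVec {P : Type*} [TopologicalSpace P]
    [FirstCountableTopology P] {s : Set P} (hs : IsCompact s)
    (hM : ∀ i j, IntervalIntegrable (fun t => M t i j) volume c x)
    {w : ℝ → Fin 2 → ℝ} (hw : ContinuousOn w (uIcc c x)) {v : P → ℝ → Fin 2 → ℝ}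
    (hv : ContinuousOn (fun p : P × ℝ => v p.1 p.2) (s ×ˢ uIcc c x)) :
    ContinuousOn (fun e => ∫ t in c..x, ip (w t) (M t *ᵥ v e t)) s := by
  have hslice : ∀ e ∈ s, ContinuousOn (v e) (uIcc c x) := fun e he =>
    hv.comp (Continuous.continuousOn (by fun_prop)) fun t ht => mk_mem_prod he ht
  have hsum : ∀ e ∈ s, ∫ t in c..x, ∑ j, (w t ᵥ* M t) j * v e t j
      = ∑ j, ∫ t in c..x, (w t ᵥ* M t) j * v e t j := fun e he =>
    intervalIntegral.integral_finsetSum fun j _ =>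
      (intervalIntegrable_vecMul_apply hM hw j).mul_continuousOn
        (continuousOn_pi.mp (hslice e he) j)
  simp only [ip_mulVec_eq_sum]
  exact (continuousOn_finsetSum Finset.univ fun j _ =>
    continuousOn_intervalIntegral_mul (g := fun e t => v e t j) hs
      (intervalIntegrable_vecMul_apply hM hw j) (continuousOn_pi.mp hv j)).congr hsum

variable {w : ℝ → Fin 2 → ℝ}

theorem intervalIntegral_ip_mulVec_self_nonneg (hxc : x ≤ c)
    (hM : ∀ᵐ t, t ∈ Ioc x c → (M t).PosSemidef) :
    0 ≤ ∫ t in x..c, ip (w t) (M t *ᵥ w t) := by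
  rw [intervalIntegral.integral_of_le hxc]
  exact setIntegral_nonneg_ae measurableSet_Ioc <| by
    filter_upwards [hM] with t ht hmem using (ht hmem).ip_mulVec_self_nonneg (w t)

theorem intervalIntegral_ip_mulVec_self_pos
    (hint : IntervalIntegrable (fun t => ip (w t) (M t *ᵥ w t)) volume x c)
    (hM : ∀ᵐ t, t ∈ Ioc x c → (M t).PosSemidef) (hw : ∀ t ∈ Ioo x c, w t ≠ 0)
    (hvol : 0 < volume {r | r ∈ Ioo x c ∧ (M r).PosDef}) :
    0 < ∫ t in x..c, ip (w t) (M t *ᵥ w t) := by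
  obtain ⟨r, hr, -⟩ := nonempty_of_measure_ne_zero hvol.ne'
  have hxc : x < c := hr.1.trans hr.2
  have hnonneg : 0 ≤ᵐ[volume.restrict (uIoc x c)] fun t => ip (w t) (M t *ᵥ w t) := by
    rw [uIoc_of_le hxc.le]
    exact (ae_restrict_iff' measurableSet_Ioc).mpr <| by
      filter_upwards [hM] with t ht hmem using (ht hmem).ip_mulVec_self_nonneg (w t)
  rw [intervalIntegral.integral_pos_iff_support_of_nonneg_ae' hnonneg hint]
  refine ⟨hxc, hvol.trans_le (measure_mono fun r ⟨hr, hpd⟩ => ?_)⟩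
  exact ⟨(hpd.ip_mulVec_self_pos (hw r hr)).ne', Ioo_subset_Ioc_self hr⟩

theorem intervalIntegral_ip_mulVec_self_nonneg_and_pos {a b : ℝ}
    (hM : ∀ i j, IntegrableOn (fun t => M t i j) (Icc a b) volume)
    (hpsd : ∀ᵐ t, t ∈ Icc a b → (M t).PosSemidef) (hw : ContinuousOn w (Icc a b))
    (hw0 : ∀ t ∈ Icc a b, w t ≠ 0) (hx : x ∈ Icc a b) (hc : c ∈ Icc a b) (hxc : x ≤ c) :
    0 ≤ ∫ t in x..c, ip (w t) (M t *ᵥ w t) ∧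
      (0 < volume {r | r ∈ Ioo x c ∧ (M r).PosDef} →
        0 < ∫ t in x..c, ip (w t) (M t *ᵥ w t)) := by
  have hsub : uIcc x c ⊆ Icc a b := uIcc_subset_Icc hx hc
  have hpsd' : ∀ᵐ t, t ∈ Ioc x c → (M t).PosSemidef := by
    filter_upwards [hpsd] with t ht hmem
    exact ht (hsub (Ioc_subset_Icc_self.trans Icc_subset_uIcc hmem))
  refine ⟨intervalIntegral_ip_mulVec_self_nonneg hxc hpsd', intervalIntegral_ip_mulVec_self_pos
    (intervalIntegrable_ip_mulVec (fun i j => ((hM i j).mono_set hsub).intervalIntegrable)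
      (hw.mono hsub) (hw.mono hsub))
    hpsd' fun t ht => hw0 t (hsub (Ioo_subset_Icc_self.trans Icc_subset_uIcc ht))⟩

end IntegralOfIp

theorem wronskian_deriv_eq_ip_sub_mulVec {A B : Matrix (Fin 2) (Fin 2) ℝ} (hA : A.IsSymm)
    {w v w' v' : Fin 2 → ℝ} (hw : Jmat *ᵥ w' + A *ᵥ w = 0) (hv : Jmat *ᵥ v' + B *ᵥ v = 0) :
    (w' 0 * v 1 + w 0 * v' 1) - (w' 1 * v 0 + w 1 * v' 0) = ip w ((B - A) *ᵥ v) := by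
  simp only [funext_iff, Fin.forall_fin_two, Jmat, mulVec, dotProduct, Fin.sum_univ_two,
    Pi.add_apply, Pi.zero_apply, of_apply, cons_val', cons_val_zero, cons_val_one, empty_val',
    cons_val_fin_one] at hw hv
  simp only [ip, mulVec, dotProduct, Fin.sum_univ_two, Matrix.sub_apply]
  linear_combination v 1 * hw.2 + v 0 * hw.1 - w 0 * hv.1 - w 1 * hv.2 +
    (w 1 * v 0 - w 0 * v 1) * hA.apply 0 1

theorem IsDiracSolution.continuousOn {I : Set ℝ} {φ : ℝ → Matrix (Fin 2) (Fin 2) ℝ} {lam : ℝ}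
    {u : ℝ → Fin 2 → ℝ} (hu : IsDiracSolution I φ lam u) : ContinuousOn u I :=
  let ⟨_, ⟨hcont, _⟩, _⟩ := hu
  hcont

theorem IsDiracSolution.wronskian_sub_eq_integral {a b : ℝ}
    {φ ψ : ℝ → Matrix (Fin 2) (Fin 2) ℝ} (hφ : ∀ x ∈ Icc a b, (φ x).IsSymm)
    {w v : ℝ → Fin 2 → ℝ} (hw : IsDiracSolution (Icc a b) φ 0 w)
    (hv : IsDiracSolution (Icc a b) ψ 0 v) {c x : ℝ} (hc : c ∈ Icc a b) (hx : x ∈ Icc a b) :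
    Wr w v x - Wr w v c = ∫ t in c..x, ip (w t) ((ψ t - φ t) *ᵥ v t) := by
  obtain ⟨w', ⟨hwc, hwI⟩, hw'⟩ := hw
  obtain ⟨v', ⟨hvc, hvI⟩, hv'⟩ := hv
  have hsub : uIcc c x ⊆ Icc a b := uIcc_subset_Icc hc hx
  have hprod : ∀ i j, ∫ t in c..x, (w' t i * v t j + w t i * v' t j)
      = w x i * v x j - w c i * v c j := fun i j =>
    intervalIntegral_deriv_mul_add_mul_eq_sub (hwI c hc x hx i).1 (hvI c hc x hx j).1
      (fun y hy => (hwI c hc y (hsub hy) i).2) (fun y hy => (hvI c hc y (hsub hy) j).2)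
  have hint : ∀ i j,
      IntervalIntegrable (fun t => w' t i * v t j + w t i * v' t j) volume c x := fun i j =>
    ((hwI c hc x hx i).1.mul_continuousOn (continuousOn_pi.mp (hvc.mono hsub) j)).add
      ((hvI c hc x hx j).1.continuousOn_mul (continuousOn_pi.mp (hwc.mono hsub) i))
  have hWr : Wr w v x - Wr w v c
      = (w x 0 * v x 1 - w c 0 * v c 1) - (w x 1 * v x 0 - w c 1 * v c 0) := by
    unfold Wr; ring
  rw [hWr, ← hprod 0 1, ← hprod 1 0, ← intervalIntegral.integral_sub (hint 0 1) (hint 1 0)]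
  refine intervalIntegral.integral_congr_ae ?_
  filter_upwards [hw', hv'] with t hwt hvt ht
  have ht' : t ∈ Icc a b := hsub (uIoc_subset_uIcc ht)
  exact wronskian_deriv_eq_ip_sub_mulVec (hφ t ht') (by simpa using hwt ht')
    (by simpa using hvt ht')

theorem wronskian_partial_eps_sub_eq_integral {a b : ℝ}
    {φ₀ φ₁ : ℝ → Matrix (Fin 2) (Fin 2) ℝ}
    (hs₀ : ∀ x ∈ Icc a b, (φ₀ x).IsSymm) (hs₁ : ∀ x ∈ Icc a b, (φ₁ x).IsSymm)
    (hi₀ : ∀ i j : Fin 2, IntegrableOn (fun x => φ₀ x i j) (Icc a b) volume)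
    (hi₁ : ∀ i j : Fin 2, IntegrableOn (fun x => φ₁ x i j) (Icc a b) volume)
    {u uε : ℝ → ℝ → Fin 2 → ℝ}
    (huc : ∀ i : Fin 2, ContinuousOn (fun p : ℝ × ℝ => u p.1 p.2 i) (Icc 0 1 ×ˢ Icc a b))
    (hder : ∀ ε ∈ Icc (0:ℝ) 1, ∀ x ∈ Icc a b, ∀ i : Fin 2,
      HasDerivAt (fun e => u e x i) (uε ε x i) ε)
    (hsol : ∀ ε ∈ Icc (0:ℝ) 1,
      IsDiracSolution (Icc a b) (fun x => φ₀ x + ε • (φ₁ x - φ₀ x)) 0 (u ε))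
    {ε : ℝ} (hε : ε ∈ Icc (0:ℝ) 1) {c x : ℝ} (hc : c ∈ Icc a b) (hx : x ∈ Icc a b) :
    Wr (u ε) (uε ε) x - Wr (u ε) (uε ε) c
      = ∫ t in c..x, ip (u ε t) ((φ₁ t - φ₀ t) *ᵥ u ε t) := by
  have hsub : uIcc c x ⊆ Icc a b := uIcc_subset_Icc hc hx
  have hM : ∀ i j, IntervalIntegrable (fun t => (φ₁ t - φ₀ t) i j) volume c x := fun i j =>
    (((hi₁ i j).sub (hi₀ i j)).mono_set hsub).intervalIntegrable
  have hsymm : ∀ t ∈ Icc a b, (φ₀ t + ε • (φ₁ t - φ₀ t)).IsSymm := fun t ht =>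
    (hs₀ t ht).add (((hs₁ t ht).sub (hs₀ t ht)).smul ε)
  set H : ℝ → ℝ := fun e => ∫ t in c..x, ip (u ε t) ((φ₁ t - φ₀ t) *ᵥ u e t)
  have hLH : ∀ e ∈ Icc (0:ℝ) 1, Wr (u ε) (u e) x - Wr (u ε) (u e) c = (e - ε) * H e := by
    intro e he
    rw [(hsol ε hε).wronskian_sub_eq_integral hsymm (hsol e he) hc hx,
      ← intervalIntegral.integral_const_mul]
    congr 1 with t
    have hdiff : φ₀ t + e • (φ₁ t - φ₀ t) - (φ₀ t + ε • (φ₁ t - φ₀ t))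
        = (e - ε) • (φ₁ t - φ₀ t) := by
      rw [sub_smul]; abel
    rw [hdiff, ip_eq_dotProduct, ip_eq_dotProduct, smul_mulVec, dotProduct_smul, smul_eq_mul]
  have hH : ContinuousWithinAt H (Icc 0 1) ε :=
    continuousOn_intervalIntegral_ip_mulVec isCompact_Icc hM
      ((hsol ε hε).continuousOn.mono hsub)
      ((continuousOn_pi.mpr huc).mono (prod_mono subset_rfl hsub)) ε hε
  have hL : HasDerivAt (fun e => Wr (u ε) (u e) x - Wr (u ε) (u e) c)
      (Wr (u ε) (uε ε) x - Wr (u ε) (uε ε) c) ε := by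
    unfold Wr
    exact (((hder ε hε x hx 1).const_mul _).sub ((hder ε hε x hx 0).const_mul _)).sub
      (((hder ε hε c hc 1).const_mul _).sub ((hder ε hε c hc 0).const_mul _))
  exact (uniqueDiffOn_Icc zero_lt_one ε hε).eq_deriv _ hL.hasDerivWithinAt
    (hasDerivWithinAt_of_eqOn_sub_mul hLH hH hε)

theorem wronskian_partial_eps_eq_integral_of_fixed {a b : ℝ}
    {φ₀ φ₁ : ℝ → Matrix (Fin 2) (Fin 2) ℝ}
    (hs₀ : ∀ x ∈ Icc a b, (φ₀ x).IsSymm) (hs₁ : ∀ x ∈ Icc a b, (φ₁ x).IsSymm)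
    (hi₀ : ∀ i j : Fin 2, IntegrableOn (fun x => φ₀ x i j) (Icc a b) volume)
    (hi₁ : ∀ i j : Fin 2, IntegrableOn (fun x => φ₁ x i j) (Icc a b) volume)
    {u uε : ℝ → ℝ → Fin 2 → ℝ}
    (huc : ∀ i : Fin 2, ContinuousOn (fun p : ℝ × ℝ => u p.1 p.2 i) (Icc 0 1 ×ˢ Icc a b))
    (hder : ∀ ε ∈ Icc (0:ℝ) 1, ∀ x ∈ Icc a b, ∀ i : Fin 2,
      HasDerivAt (fun e => u e x i) (uε ε x i) ε)
    (hsol : ∀ ε ∈ Icc (0:ℝ) 1,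
      IsDiracSolution (Icc a b) (fun x => φ₀ x + ε • (φ₁ x - φ₀ x)) 0 (u ε))
    {ε : ℝ} (hε : ε ∈ Icc (0:ℝ) 1) {c x : ℝ} (hc : c ∈ Icc a b)
    (hfix : ∀ e ∈ Icc (0:ℝ) 1, u e c = u ε c) (hx : x ∈ Icc a b) :
    Wr (u ε) (uε ε) x = ∫ t in x..c, ip (u ε t) ((φ₀ t - φ₁ t) *ᵥ u ε t) := by
  have hzero : ∀ i, uε ε c i = 0 := fun i =>
    (hder ε hε c hc i).eq_zero_of_eqOn_const (uniqueDiffOn_Icc zero_lt_one ε hε)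
      fun e he => congrFun (hfix e he) i
  have h := wronskian_partial_eps_sub_eq_integral hs₀ hs₁ hi₀ hi₁ huc hder hsol hε hc hx
  rw [show Wr (u ε) (uε ε) c = 0 by simp [Wr, hzero], sub_zero] at h
  rw [h, intervalIntegral.integral_symm, ← intervalIntegral.integral_neg]
  congr 1 with t
  rw [← neg_sub, neg_mulVec, ip_eq_dotProduct, ip_eq_dotProduct, dotProduct_neg, neg_neg]

theorem pruefer_deriv_mul_ip_self {s : Set ℝ} {v : ℝ → Fin 2 → ℝ} {v' : Fin 2 → ℝ}
    {θ : ℝ → ℝ} {θ' ε : ℝ} (hv : ∀ i, HasDerivAt (fun e => v e i) (v' i) ε)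
    (hθ : HasDerivAt θ θ' ε) (hs : UniqueDiffWithinAt ℝ s ε) (hε : ε ∈ s)
    (hpol : ∀ e ∈ s, ∃ ρ : ℝ, v e 0 = ρ * sin (θ e) ∧ v e 1 = ρ * cos (θ e)) :
    θ' * ip (v ε) (v ε) = -(v ε 0 * v' 1 - v ε 1 * v' 0) := by
  have hg : HasDerivAt (fun e => v e 0 * cos (θ e) - v e 1 * sin (θ e))
      (v' 0 * cos (θ ε) + v ε 0 * (-sin (θ ε) * θ')
        - (v' 1 * sin (θ ε) + v ε 1 * (cos (θ ε) * θ'))) ε :=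
    ((hv 0).mul ((hasDerivAt_cos _).comp ε hθ)).sub ((hv 1).mul ((hasDerivAt_sin _).comp ε hθ))
  have hg0 := hg.eq_zero_of_eqOn_const hs fun e he => by
    obtain ⟨ρ, h0, h1⟩ := hpol e he
    obtain ⟨ρε, hε0, hε1⟩ := hpol ε hε
    rw [h0, h1, hε0, hε1]
    ring
  obtain ⟨ρ, h0, h1⟩ := hpol ε hε
  simp only [ip, h0, h1] at hg0 ⊢
  linear_combination (-ρ) * hg0

theorem pruefer_partial_eps_eq {I : Set ℝ} {u uε : ℝ → ℝ → Fin 2 → ℝ} {θ θε : ℝ → ℝ → ℝ}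
    {ε x : ℝ} (hε : ε ∈ Icc (0:ℝ) 1) (hx : x ∈ I)
    (hder : ∀ i, HasDerivAt (fun e => u e x i) (uε ε x i) ε)
    (hθder : HasDerivAt (fun e => θ e x) (θε ε x) ε)
    (hθp : ∀ e ∈ Icc (0:ℝ) 1, IsPruefer I (u e) (θ e)) (hnt : u ε x ≠ 0) :
    θε ε x = -Wr (u ε) (uε ε) x / ip (u ε x) (u ε x) := by
  rw [eq_div_iff (ip_self_pos hnt).ne']
  refine pruefer_deriv_mul_ip_self (v := fun e => u e x) (θ := fun e => θ e x) hder hθder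
    (uniqueDiffOn_Icc zero_lt_one ε hε) hε fun e he => ?_
  obtain ⟨ρ, -, h0, h1⟩ := (hθp e he).2 x hx
  exact ⟨ρ, h0, h1⟩

theorem pruefer_angle_monotone_in_eps_general
    (a b : ℝ)
    (φ₀ φ₁ : ℝ → Matrix (Fin 2) (Fin 2) ℝ)
    (hs₀ : ∀ x ∈ Set.Icc a b, (φ₀ x).IsSymm) (hs₁ : ∀ x ∈ Set.Icc a b, (φ₁ x).IsSymm)
    (hi₀ : ∀ i j : Fin 2, IntegrableOn (fun x => φ₀ x i j) (Set.Icc a b) volume)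
    (hi₁ : ∀ i j : Fin 2, IntegrableOn (fun x => φ₁ x i j) (Set.Icc a b) volume)
    (hpos : ∀ᵐ x ∂volume, x ∈ Set.Icc a b → (φ₀ x - φ₁ x).PosSemidef)
    (α β : ℝ)
    (u uε : ℝ → ℝ → Fin 2 → ℝ)
    (huc : ∀ i : Fin 2, ContinuousOn (fun p : ℝ × ℝ => u p.1 p.2 i)
      (Set.Icc 0 1 ×ˢ Set.Icc a b))
    (hder : ∀ ε ∈ Set.Icc (0:ℝ) 1, ∀ x ∈ Set.Icc a b, ∀ i : Fin 2,
      HasDerivAt (fun e => u e x i) (uε ε x i) ε)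
    (hsol : ∀ ε ∈ Set.Icc (0:ℝ) 1,
      IsDiracSolution (Set.Icc a b) (fun x => φ₀ x + ε • (φ₁ x - φ₀ x)) 0 (u ε))
    (hnt : ∀ ε ∈ Set.Icc (0:ℝ) 1, ∀ x ∈ Set.Icc a b, u ε x ≠ 0)
    (θ θε : ℝ → ℝ → ℝ)
    (hθp : ∀ ε ∈ Set.Icc (0:ℝ) 1, IsPruefer (Set.Icc a b) (u ε) (θ ε))
    (hθder : ∀ ε ∈ Set.Icc (0:ℝ) 1, ∀ x ∈ Set.Icc a b,
      HasDerivAt (fun e => θ e x) (θε ε x) ε) :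
    -- normalization at `b`
    ((∀ ε ∈ Set.Icc (0:ℝ) 1, u ε b = ![Real.sin β, Real.cos β] ∧ θ ε b = β) →
      ∀ ε ∈ Set.Icc (0:ℝ) 1, ∀ x ∈ Set.Icc a b,
        θε ε x = -Wr (u ε) (uε ε) x / ip (u ε x) (u ε x) ∧
        θε ε x ≤ 0 ∧
        (0 < volume {r | r ∈ Set.Ioo x b ∧ (φ₀ r - φ₁ r).PosDef} → θε ε x < 0)) ∧
    -- normalization at `a`
    ((∀ ε ∈ Set.Icc (0:ℝ) 1, u ε a = ![Real.sin α, Real.cos α] ∧ θ ε a = α) →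
      ∀ ε ∈ Set.Icc (0:ℝ) 1, ∀ x ∈ Set.Icc a b,
        θε ε x = -Wr (u ε) (uε ε) x / ip (u ε x) (u ε x) ∧
        0 ≤ θε ε x ∧
        (0 < volume {r | r ∈ Set.Ioo a x ∧ (φ₀ r - φ₁ r).PosDef} → 0 < θε ε x)) := by
  have hθε : ∀ ε ∈ Icc (0:ℝ) 1, ∀ x ∈ Icc a b,
      θε ε x = -Wr (u ε) (uε ε) x / ip (u ε x) (u ε x) := fun ε hε x hx =>
    pruefer_partial_eps_eq hε hx (hder ε hε x hx) (hθder ε hε x hx) hθp (hnt ε hε x hx)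
  have hsign := fun ε (hε : ε ∈ Icc (0:ℝ) 1) (x c : ℝ) =>
    intervalIntegral_ip_mulVec_self_nonneg_and_pos (x := x) (c := c)
      (M := fun t => φ₀ t - φ₁ t) (fun i j => (hi₀ i j).sub (hi₁ i j)) hpos
      (hsol ε hε).continuousOn (hnt ε hε)
  refine ⟨fun hb ε hε x hx => ?_, fun ha ε hε x hx => ?_⟩
  · have hbI : b ∈ Icc a b := ⟨hx.1.trans hx.2, le_rfl⟩
    obtain ⟨hnonneg, hstrict⟩ := hsign ε hε x b hx hbI hx.2
    have hip := ip_self_pos (hnt ε hε x hx)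
    rw [hθε ε hε x hx, wronskian_partial_eps_eq_integral_of_fixed hs₀ hs₁ hi₀ hi₁ huc hder hsol
      hε hbI (fun e he => by rw [(hb e he).1, (hb ε hε).1]) hx, neg_div]
    exact ⟨rfl, neg_nonpos.mpr (div_nonneg hnonneg hip.le),
      fun hvol => neg_neg_of_pos (div_pos (hstrict hvol) hip)⟩
  · have haI : a ∈ Icc a b := ⟨le_rfl, hx.1.trans hx.2⟩
    obtain ⟨hnonneg, hstrict⟩ := hsign ε hε a x haI hx hx.1
    have hip := ip_self_pos (hnt ε hε x hx)
    rw [hθε ε hε x hx, wronskian_partial_eps_eq_integral_of_fixed hs₀ hs₁ hi₀ hi₁ huc hder hsol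
      hε haI (fun e he => by rw [(ha e he).1, (ha ε hε).1]) hx, intervalIntegral.integral_symm,
      neg_neg]
    exact ⟨rfl, div_nonneg hnonneg hip.le, fun hvol => div_pos (hstrict hvol) hip⟩

theorem pruefer_angle_monotone_in_eps
    (a b : ℝ) (hab : a < b)
    (φ₀ φ₁ : ℝ → Matrix (Fin 2) (Fin 2) ℝ)
    (hs₀ : ∀ x ∈ Set.Icc a b, (φ₀ x).IsSymm) (hs₁ : ∀ x ∈ Set.Icc a b, (φ₁ x).IsSymm)
    (hi₀ : ∀ i j : Fin 2, IntegrableOn (fun x => φ₀ x i j) (Set.Icc a b) volume)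
    (hi₁ : ∀ i j : Fin 2, IntegrableOn (fun x => φ₁ x i j) (Set.Icc a b) volume)
    (hpos : ∀ᵐ x ∂volume, x ∈ Set.Icc a b → (φ₀ x - φ₁ x).PosSemidef)
    (α β : ℝ)
    (u uε : ℝ → ℝ → Fin 2 → ℝ)
    (huc : ∀ i : Fin 2, ContinuousOn (fun p : ℝ × ℝ => u p.1 p.2 i)
      (Set.Icc 0 1 ×ˢ Set.Icc a b))
    (huεc : ∀ i : Fin 2, ContinuousOn (fun p : ℝ × ℝ => uε p.1 p.2 i)
      (Set.Icc 0 1 ×ˢ Set.Icc a b))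
    (hder : ∀ ε ∈ Set.Icc (0:ℝ) 1, ∀ x ∈ Set.Icc a b, ∀ i : Fin 2,
      HasDerivAt (fun e => u e x i) (uε ε x i) ε)
    (hsol : ∀ ε ∈ Set.Icc (0:ℝ) 1,
      IsDiracSolution (Set.Icc a b) (fun x => φ₀ x + ε • (φ₁ x - φ₀ x)) 0 (u ε))
    (hnt : ∀ ε ∈ Set.Icc (0:ℝ) 1, ∀ x ∈ Set.Icc a b, u ε x ≠ 0)
    (θ θε : ℝ → ℝ → ℝ)
    (hθc : ContinuousOn (fun p : ℝ × ℝ => θ p.1 p.2) (Set.Icc 0 1 ×ˢ Set.Icc a b))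
    (hθp : ∀ ε ∈ Set.Icc (0:ℝ) 1, IsPruefer (Set.Icc a b) (u ε) (θ ε))
    (hθder : ∀ ε ∈ Set.Icc (0:ℝ) 1, ∀ x ∈ Set.Icc a b,
      HasDerivAt (fun e => θ e x) (θε ε x) ε) :
    -- normalization at `b`
    ((∀ ε ∈ Set.Icc (0:ℝ) 1, u ε b = ![Real.sin β, Real.cos β] ∧ θ ε b = β) →
      ∀ ε ∈ Set.Icc (0:ℝ) 1, ∀ x ∈ Set.Icc a b,
        θε ε x = -Wr (u ε) (uε ε) x / ip (u ε x) (u ε x) ∧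
        θε ε x ≤ 0 ∧
        (0 < volume {r | r ∈ Set.Ioo x b ∧ (φ₀ r - φ₁ r).PosDef} → θε ε x < 0)) ∧
    -- normalization at `a`
    ((∀ ε ∈ Set.Icc (0:ℝ) 1, u ε a = ![Real.sin α, Real.cos α] ∧ θ ε a = α) →
      ∀ ε ∈ Set.Icc (0:ℝ) 1, ∀ x ∈ Set.Icc a b,
        θε ε x = -Wr (u ε) (uε ε) x / ip (u ε x) (u ε x) ∧
        0 ≤ θε ε x ∧
        (0 < volume {r | r ∈ Set.Ioo a x ∧ (φ₀ r - φ₁ r).PosDef} → 0 < θε ε x)) :=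
  pruefer_angle_monotone_in_eps_general a b φ₀ φ₁ hs₀ hs₁ hi₀ hi₁ hpos α β u uε huc hder hsol hnt θ
    θε hθp hθder
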